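/- arXiv:1703.05233 — 3 statements merged into one kernel-verified Lean document; each statement's English description precedes it below -/
import Mathlib

section
/- Let M_1, …, M_m : ℝ^n → ℝ^n be paracontractions with respect to the 2-norm ‖·‖_2 sharing at least one common fixed point, and let M be the stacked map M(x_1, …, x_m) = (M_1(x_1), …, M_m(x_m)). Let S(1), S(2), … be a sequence of m × m doubly stochastic matrices with positive diagonal entries, drawn from a finite set of matrices, and suppose the graph γ(S(t)) of each S(t) is strongly connected. Then for any initial x(1) ∈ (ℝ^n)^m, the iterates x(t+1) = M((S(t) ⊗ I) x(t)) converge as t → ∞ to a point in F(M) ∩ C; that is, all m blocks of the limit are equal and the common block is a common fixed point of M_1, …, M_m. -/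
open Filter Topology Finset
open scoped ENNReal

def IsNormOn {E : Type*} [AddCommGroup E] [Module ℝ E] (N : E → ℝ) : Prop :=
  (∀ x, N x = 0 ↔ x = 0) ∧
  (∀ (c : ℝ) (x : E), N (c • x) = |c| * N x) ∧
  (∀ x y : E, N (x + y) ≤ N x + N y)

def IsParacontraction {E : Type*} [AddCommGroup E] [Module ℝ E] [TopologicalSpace E]
    (N : E → ℝ) (P : E → E) : Prop :=
  Continuous P ∧ ∀ x y : E, P x ≠ x → P y = y → N (P x - y) < N (x - y)

def QuasiNonexpansive {E : Type*} [AddCommGroup E] (N : E → ℝ) (P : E → E) : Prop :=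
  ∀ x y : E, P y = y → N (P x - y) ≤ N (x - y)

noncomputable def pnorm {n : ℕ} (p : ℝ) (x : Fin n → ℝ) : ℝ :=
  (∑ i, |x i| ^ p) ^ (1 / p)

noncomputable def pnormE {n : ℕ} (p : ℝ≥0∞) (x : Fin n → ℝ) : ℝ :=
  if p = ⊤ then ⨆ i, |x i| else (∑ i, |x i| ^ p.toReal) ^ (1 / p.toReal)

noncomputable def mixed22 {m n : ℕ} (x : Fin m → Fin n → ℝ) : ℝ :=
  pnorm 2 (fun i => pnorm 2 (x i))

noncomputable def mixedPInf {m n : ℕ} (p : ℝ) (x : Fin m → Fin n → ℝ) : ℝ :=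
  ⨆ i, pnorm p (x i)

noncomputable def mixedEInf {m n : ℕ} (p : ℝ≥0∞) (x : Fin m → Fin n → ℝ) : ℝ :=
  ⨆ i, pnormE p (x i)

def IsStochastic {m : ℕ} (S : Matrix (Fin m) (Fin m) ℝ) : Prop :=
  (∀ i j, 0 ≤ S i j) ∧ ∀ i, ∑ j, S i j = 1

def IsDoublyStochastic {m : ℕ} (S : Matrix (Fin m) (Fin m) ℝ) : Prop :=
  IsStochastic S ∧ ∀ j, ∑ i, S i j = 1

def kron {m n : ℕ} (S : Matrix (Fin m) (Fin m) ℝ) (x : Fin m → Fin n → ℝ) :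
    Fin m → Fin n → ℝ :=
  fun i => ∑ j, S i j • x j

def stackMap {m n : ℕ} (M : Fin m → (Fin n → ℝ) → (Fin n → ℝ)) :
    (Fin m → Fin n → ℝ) → (Fin m → Fin n → ℝ) :=
  fun x i => M i (x i)

def consensusSet (m n : ℕ) : Set (Fin m → Fin n → ℝ) :=
  {x | ∀ i j : Fin m, x i = x j}

def StronglyConnected {V : Type*} (G : V → V → Prop) : Prop :=
  ∀ i j : V, Relation.ReflTransGen G i j

def graphComp {V : Type*} (Gq Gp : V → V → Prop) : V → V → Prop :=
  fun i j => ∃ k, Gp i k ∧ Gq k j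

def composeChain {m : ℕ} (G : ℕ → Fin m → Fin m → Prop) (a : ℕ) :
    ℕ → (Fin m → Fin m → Prop)
  | 0 => G a
  | k + 1 => graphComp (G (a + (k + 1))) (composeChain G a k)

def mapChain {α : Type*} (F : ℕ → α → α) : ℕ → α → α
  | 0 => id
  | k + 1 => F (k + 1) ∘ mapChain F k

noncomputable def Phi {m : ℕ} (S : ℕ → Matrix (Fin m) (Fin m) ℝ) (τ t : ℕ) :
    Matrix (Fin m) (Fin m) ℝ :=
  (List.range (t - τ)).foldl (fun A k => S (τ + k + 1) * A) 1


/-! ### Auxiliary development -/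

section Aux

def sq2 {n : ℕ} (v : Fin n → ℝ) : ℝ := ∑ c, (v c)^2

def Qsum {m n : ℕ} (x : Fin m → Fin n → ℝ) : ℝ := ∑ i, sq2 (x i)

def Dsum {m n : ℕ} (S : Matrix (Fin m) (Fin m) ℝ) (x : Fin m → Fin n → ℝ) : ℝ :=
  ∑ i, ∑ j, ∑ k, S i j * S i k * sq2 (x j - x k)

lemma sq2_nonneg {n : ℕ} (v : Fin n → ℝ) : 0 ≤ sq2 v :=
  Finset.sum_nonneg fun _ _ => sq_nonneg _

lemma Qsum_nonneg {m n : ℕ} (x : Fin m → Fin n → ℝ) : 0 ≤ Qsum x :=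
  Finset.sum_nonneg fun _ _ => sq2_nonneg _

lemma sq2_eq_zero' {n : ℕ} {v : Fin n → ℝ} (h : sq2 v = 0) : v = 0 := by
  funext c
  have := (Finset.sum_eq_zero_iff_of_nonneg (fun c _ => sq_nonneg (v c))).mp h c (Finset.mem_univ c)
  simpa [pow_eq_zero_iff] using this

lemma pnorm_two_eq {n : ℕ} (v : Fin n → ℝ) : pnorm 2 v = Real.sqrt (sq2 v) := by
  rw [pnorm, sq2, Real.sqrt_eq_rpow]
  congr 1
  refine Finset.sum_congr rfl fun c _ => ?_
  rw [show (2:ℝ) = ((2:ℕ):ℝ) by norm_num, Real.rpow_natCast, sq_abs]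

lemma sq2_lt_of_pnorm_lt {n : ℕ} {a b : Fin n → ℝ} (h : pnorm 2 a < pnorm 2 b) :
    sq2 a < sq2 b := by
  by_contra hc
  push_neg at hc
  exact absurd (Real.sqrt_le_sqrt hc) (by rw [← pnorm_two_eq, ← pnorm_two_eq]; linarith)

lemma var_identity {m : ℕ} (w z : Fin m → ℝ) (hw : ∑ j, w j = 1) :
    (∑ j, w j * z j)^2
      = (∑ j, w j * (z j)^2) - (∑ j, ∑ k, w j * w k * (z j - z k)^2) / 2 := by
  have expand : ∀ j, ∑ k, w j * w k * (z j - z k)^2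
      = w j * (z j)^2 * (∑ k, w k) + w j * (∑ k, w k * (z k)^2)
        - 2 * (w j * z j) * (∑ k, w k * z k) := by
    intro j
    rw [Finset.mul_sum, Finset.mul_sum, Finset.mul_sum, ← Finset.sum_add_distrib,
      ← Finset.sum_sub_distrib]
    exact Finset.sum_congr rfl fun k _ => by ring
  rw [Finset.sum_congr rfl fun j _ => expand j]
  rw [Finset.sum_sub_distrib, Finset.sum_add_distrib, ← Finset.sum_mul, ← Finset.sum_mul, hw,
    show ∀ s : ℝ, (∑ x, 2 * (w x * z x) * s) = 2 * (∑ x, w x * z x) * s from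
      fun s => by rw [← Finset.sum_mul, Finset.mul_sum]]
  ring

lemma kron_apply {m n : ℕ} (S : Matrix (Fin m) (Fin m) ℝ) (x : Fin m → Fin n → ℝ)
    (i : Fin m) (c : Fin n) : kron S x i c = ∑ j, S i j * x j c := by
  simp [kron]

lemma Qsum_kron {m n : ℕ} {S : Matrix (Fin m) (Fin m) ℝ} (hds : IsDoublyStochastic S)
    (x : Fin m → Fin n → ℝ) : Qsum (kron S x) = Qsum x - Dsum S x / 2 := by
  have key : ∀ i, sq2 (kron S x i)
      = (∑ j, S i j * sq2 (x j)) - (∑ j, ∑ k, S i j * S i k * sq2 (x j - x k)) / 2 := by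
    intro i
    unfold sq2
    calc ∑ c, (kron S x i c)^2 = ∑ c, ((∑ j, S i j * (x j c))^2) := by
          exact Finset.sum_congr rfl fun c _ => by rw [kron_apply]
      _ = ∑ c, ((∑ j, S i j * (x j c)^2) - (∑ j, ∑ k, S i j * S i k * (x j c - x k c)^2) / 2) :=
          Finset.sum_congr rfl fun c _ => var_identity (S i) (fun j => x j c) (hds.1.2 i)
      _ = _ := by
          rw [Finset.sum_sub_distrib, ← Finset.sum_div]
          congr 1
          · rw [Finset.sum_comm]
            exact Finset.sum_congr rfl fun j _ => by rw [Finset.mul_sum]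
          · congr 1
            rw [Finset.sum_comm]
            refine Finset.sum_congr rfl fun j _ => ?_
            rw [Finset.sum_comm]
            refine Finset.sum_congr rfl fun k _ => ?_
            rw [Finset.mul_sum]
            exact Finset.sum_congr rfl fun c _ => by simp [Pi.sub_apply]
  unfold Qsum Dsum
  rw [Finset.sum_congr rfl fun i _ => key i, Finset.sum_sub_distrib, ← Finset.sum_div]
  congr 1
  rw [Finset.sum_comm]
  refine Finset.sum_congr rfl fun j _ => ?_
  rw [← Finset.sum_mul, hds.2 j, one_mul]

lemma Dsum_nonneg {m n : ℕ} {S : Matrix (Fin m) (Fin m) ℝ} (hS : ∀ i j, 0 ≤ S i j)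
    (x : Fin m → Fin n → ℝ) : 0 ≤ Dsum S x :=
  Finset.sum_nonneg fun i _ => Finset.sum_nonneg fun j _ => Finset.sum_nonneg fun k _ =>
    mul_nonneg (mul_nonneg (hS i j) (hS i k)) (sq2_nonneg _)

lemma Qsum_kron_le {m n : ℕ} {S : Matrix (Fin m) (Fin m) ℝ} (hds : IsDoublyStochastic S)
    (x : Fin m → Fin n → ℝ) : Qsum (kron S x) ≤ Qsum x := by
  rw [Qsum_kron hds]
  linarith [Dsum_nonneg hds.1.1 x]

lemma consensus_of_Dsum_zero {m n : ℕ} {S : Matrix (Fin m) (Fin m) ℝ}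
    (hS : ∀ i j, 0 ≤ S i j) (hdiag : ∀ i, 0 < S i i)
    (hconn : StronglyConnected (fun i j : Fin m => S j i ≠ 0))
    {x : Fin m → Fin n → ℝ} (hD : Dsum S x = 0) : ∀ a b, x a = x b := by
  have hterm : ∀ i j k, S i j * S i k * sq2 (x j - x k) = 0 := by
    have h1 := (Finset.sum_eq_zero_iff_of_nonneg (fun i _ => Finset.sum_nonneg fun j _ =>
      Finset.sum_nonneg fun k _ => mul_nonneg (mul_nonneg (hS i j) (hS i k))
      (sq2_nonneg _))).mp hD
    intro i j k
    have h2 := (Finset.sum_eq_zero_iff_of_nonneg (fun j _ => Finset.sum_nonneg fun k _ =>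
      mul_nonneg (mul_nonneg (hS i j) (hS i k))
      (sq2_nonneg _))).mp (h1 i (Finset.mem_univ i))
    exact (Finset.sum_eq_zero_iff_of_nonneg (fun k _ => mul_nonneg (mul_nonneg (hS i j) (hS i k))
      (sq2_nonneg _))).mp (h2 j (Finset.mem_univ j)) k (Finset.mem_univ k)
  have hstep : ∀ a b, S b a ≠ 0 → x a = x b := by
    intro a b hne
    have h := hterm b a b
    have hb := (hdiag b).ne'
    have h0 : sq2 (x a - x b) = 0 := by
      rcases mul_eq_zero.mp h with h' | h'
      · exact absurd (mul_eq_zero.mp h') (by push_neg; exact ⟨hne, hb⟩)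
      · exact h'
    exact sub_eq_zero.mp (sq2_eq_zero' h0)
  intro a b
  induction hconn a b with
  | refl => rfl
  | tail _ hr ih => exact ih.trans (hstep _ _ hr)

lemma kron_of_consensus {m n : ℕ} {S : Matrix (Fin m) (Fin m) ℝ}
    (hrow : ∀ i, ∑ j, S i j = 1) {x : Fin m → Fin n → ℝ}
    (hc : ∀ a b, x a = x b) : kron S x = x := by
  funext i
  calc kron S x i = ∑ j, S i j • x i := Finset.sum_congr rfl fun j _ => by rw [hc j i]
    _ = (∑ j, S i j) • x i := by rw [Finset.sum_smul]
    _ = x i := by rw [hrow i, one_smul]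

lemma kron_sub {m n : ℕ} (S : Matrix (Fin m) (Fin m) ℝ) (a b : Fin m → Fin n → ℝ) :
    kron S (a - b) = kron S a - kron S b := by
  funext i
  simp [kron, smul_sub, Finset.sum_sub_distrib]

lemma consensus_of_Qsum_kron_eq {m n : ℕ} {S : Matrix (Fin m) (Fin m) ℝ}
    (hds : IsDoublyStochastic S) (hdiag : ∀ i, 0 < S i i)
    (hconn : StronglyConnected (fun i j : Fin m => S j i ≠ 0))
    {x : Fin m → Fin n → ℝ} (heq : Qsum (kron S x) = Qsum x) : ∀ a b, x a = x b := by
  have hD : Dsum S x = 0 := by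
    have := Qsum_kron hds x
    rw [heq] at this
    linarith
  exact consensus_of_Dsum_zero hds.1.1 hdiag hconn hD

section Stack

variable {n m : ℕ} {M : Fin m → (Fin n → ℝ) → (Fin n → ℝ)}
  (hpc : ∀ i, IsParacontraction (pnorm 2) (M i))

include hpc

lemma stack_block_le {x y : Fin m → Fin n → ℝ} (hy : ∀ i, M i (y i) = y i) (i : Fin m) :
    sq2 (M i (x i) - y i) ≤ sq2 (x i - y i) := by
  by_cases h : M i (x i) = x i
  · rw [h]
  · exact le_of_lt (sq2_lt_of_pnorm_lt ((hpc i).2 (x i) (y i) h (hy i)))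

lemma stack_le {x y : Fin m → Fin n → ℝ} (hy : ∀ i, M i (y i) = y i) :
    Qsum (stackMap M x - y) ≤ Qsum (x - y) :=
  Finset.sum_le_sum fun i _ => stack_block_le hpc hy i

lemma stack_lt {x y : Fin m → Fin n → ℝ} (hy : ∀ i, M i (y i) = y i)
    (hne : stackMap M x ≠ x) : Qsum (stackMap M x - y) < Qsum (x - y) := by
  obtain ⟨i0, hi0⟩ := Function.ne_iff.mp hne
  refine Finset.sum_lt_sum (fun i _ => stack_block_le hpc hy i) ⟨i0, Finset.mem_univ i0, ?_⟩
  exact sq2_lt_of_pnorm_lt ((hpc i0).2 (x i0) (y i0) hi0 (hy i0))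

lemma chain_le {S₀ : Matrix (Fin m) (Fin m) ℝ} (hds : IsDoublyStochastic S₀)
    {y : Fin m → Fin n → ℝ} (hyc : ∀ a b, y a = y b) (hyf : ∀ i, M i (y i) = y i)
    (v : Fin m → Fin n → ℝ) :
    Qsum (stackMap M (kron S₀ v) - y) ≤ Qsum (v - y) := by
  have h1 : Qsum (stackMap M (kron S₀ v) - y) ≤ Qsum (kron S₀ v - y) := stack_le hpc hyf
  have h2 : kron S₀ v - y = kron S₀ (v - y) := by
    rw [kron_sub, kron_of_consensus hds.1.2 hyc]
  calc Qsum (stackMap M (kron S₀ v) - y) ≤ Qsum (kron S₀ v - y) := h1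
    _ = Qsum (kron S₀ (v - y)) := by rw [h2]
    _ ≤ Qsum (v - y) := Qsum_kron_le hds _

lemma chain_eq {S₀ : Matrix (Fin m) (Fin m) ℝ} (hds : IsDoublyStochastic S₀)
    (hdiag : ∀ i, 0 < S₀ i i)
    (hconn : StronglyConnected (fun i j : Fin m => S₀ j i ≠ 0))
    {y : Fin m → Fin n → ℝ} (hyc : ∀ a b, y a = y b) (hyf : ∀ i, M i (y i) = y i)
    {v : Fin m → Fin n → ℝ}
    (hEq : Qsum (stackMap M (kron S₀ v) - y) = Qsum (v - y)) :
    (∀ a b, v a = v b) ∧ stackMap M v = v := by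
  have h2 : kron S₀ v - y = kron S₀ (v - y) := by
    rw [kron_sub, kron_of_consensus hds.1.2 hyc]
  have h1 : Qsum (stackMap M (kron S₀ v) - y) ≤ Qsum (kron S₀ (v - y)) := by
    rw [← h2]; exact stack_le hpc hyf
  have h3 : Qsum (kron S₀ (v - y)) ≤ Qsum (v - y) := Qsum_kron_le hds _
  have hmid : Qsum (kron S₀ (v - y)) = Qsum (v - y) := le_antisymm h3 (by rw [← hEq]; exact h1)
  have hcons' : ∀ a b, (v - y) a = (v - y) b := consensus_of_Qsum_kron_eq hds hdiag hconn hmid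
  have hcons : ∀ a b, v a = v b := by
    intro a b
    have := hcons' a b
    simp only [Pi.sub_apply] at this
    have hy := hyc a b
    calc v a = (v a - y a) + y a := by ring
      _ = (v b - y b) + y b := by rw [this, hy]
      _ = v b := by ring
  have hkfix : kron S₀ v = v := kron_of_consensus hds.1.2 hcons
  rw [hkfix] at hEq
  refine ⟨hcons, ?_⟩
  by_contra hne
  exact absurd hEq (ne_of_lt (stack_lt hpc hyf hne))

end Stack

end Aux

set_option maxHeartbeats 1000000 in
theorem stmt9 {n m : ℕ} (M : Fin m → (Fin n → ℝ) → (Fin n → ℝ))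
    (hpc : ∀ i, IsParacontraction (pnorm 2) (M i))
    (hcommon : ∃ y : Fin n → ℝ, ∀ i, M i y = y)
    (S : ℕ → Matrix (Fin m) (Fin m) ℝ)
    (hds : ∀ t, IsDoublyStochastic (S t))
    (hdiag : ∀ t i, 0 < S t i i)
    (hfin : (Set.range S).Finite)
    (hconn : ∀ t, StronglyConnected (fun i j : Fin m => S t j i ≠ 0))
    (x : ℕ → Fin m → Fin n → ℝ)
    (hx : ∀ t, 1 ≤ t → x (t + 1) = stackMap M (kron (S t) (x t))) :
    ∃ z : Fin n → ℝ, Tendsto x atTop (𝓝 (fun _ => z)) ∧ ∀ i, M i z = z := by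
  classical
  obtain ⟨y₀, hy₀⟩ := hcommon
  rcases Nat.eq_zero_or_pos m with hm | hm
  · subst hm
    refine ⟨y₀, ?_, hy₀⟩
    have hx0 : ∀ t, x t = fun _ => y₀ := fun t => funext fun i => i.elim0
    have : x = fun _ => (fun _ => y₀ : Fin 0 → Fin n → ℝ) := funext hx0
    rw [this]
    exact tendsto_const_nhds
  -- the stacked sequence, shifted so the recurrence holds everywhere
  set u : ℕ → Fin m → Fin n → ℝ := fun t => x (t + 1) with hu_def
  have hu : ∀ t, u (t + 1) = stackMap M (kron (S (t + 1)) (u t)) := by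
    intro t
    simp only [hu_def]
    exact hx (t + 1) (Nat.le_add_left 1 t)
  set ystar : Fin m → Fin n → ℝ := fun _ => y₀ with hys_def
  have hysc : ∀ a b : Fin m, ystar a = ystar b := fun _ _ => rfl
  have hysf : ∀ i, M i (ystar i) = ystar i := fun i => hy₀ i
  -- monotone distances to any consensus fixed point
  have step_mono : ∀ (z : Fin m → Fin n → ℝ), (∀ a b, z a = z b) →
      (∀ i, M i (z i) = z i) → ∀ t, Qsum (u (t + 1) - z) ≤ Qsum (u t - z) := by
    intro z hzc hzf t
    rw [hu t]
    exact chain_le hpc (hds (t + 1)) hzc hzf (u t)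
  have antid : Antitone fun t => Qsum (u t - ystar) :=
    antitone_nat_of_succ_le (step_mono ystar hysc hysf)
  -- coordinatewise bounds
  have coordsq : ∀ (z : Fin m → Fin n → ℝ) (w : Fin m → Fin n → ℝ) (i : Fin m) (c : Fin n),
      (w i c - z i c) ^ 2 ≤ Qsum (w - z) := by
    intro z w i c
    have h1 : (w i c - z i c) ^ 2 ≤ sq2 ((w - z) i) := by
      have : ((w - z) i c) ^ 2 ≤ sq2 ((w - z) i) :=
        Finset.single_le_sum (f := fun c => ((w - z) i c) ^ 2)
          (fun c _ => sq_nonneg _) (Finset.mem_univ c)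
      simpa [Pi.sub_apply] using this
    exact h1.trans (Finset.single_le_sum (f := fun i => sq2 ((w - z) i))
      (fun i _ => sq2_nonneg _) (Finset.mem_univ i))
  have coordabs : ∀ (z w : Fin m → Fin n → ℝ) (i : Fin m) (c : Fin n),
      |w i c - z i c| ≤ Real.sqrt (Qsum (w - z)) := by
    intro z w i c
    rw [← Real.sqrt_sq_eq_abs]
    exact Real.sqrt_le_sqrt (coordsq z w i c)
  -- the orbit is bounded
  set C : ℝ := Real.sqrt (Qsum (u 0 - ystar)) + ‖y₀‖ with hC_def
  have hC0 : 0 ≤ C := add_nonneg (Real.sqrt_nonneg _) (norm_nonneg _)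
  have hmem : ∀ t, u t ∈ Metric.closedBall (0 : Fin m → Fin n → ℝ) C := by
    intro t
    rw [Metric.mem_closedBall, dist_zero_right]
    rw [pi_norm_le_iff_of_nonneg hC0]
    intro i
    rw [pi_norm_le_iff_of_nonneg hC0]
    intro c
    have h1 : |u t i c - y₀ c| ≤ Real.sqrt (Qsum (u t - ystar)) := coordabs ystar (u t) i c
    have h2 : Real.sqrt (Qsum (u t - ystar)) ≤ Real.sqrt (Qsum (u 0 - ystar)) :=
      Real.sqrt_le_sqrt (antid (Nat.zero_le t))
    have h3 : |y₀ c| ≤ ‖y₀‖ := by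
      simpa [Real.norm_eq_abs] using norm_le_pi_norm y₀ c
    calc ‖u t i c‖ = |u t i c| := rfl
      _ ≤ |u t i c - y₀ c| + |y₀ c| := by
          have := abs_add_le (u t i c - y₀ c) (y₀ c); simpa using this
      _ ≤ C := by rw [hC_def]; exact add_le_add (h1.trans h2) h3
  -- Bolzano–Weierstrass
  obtain ⟨z, -, φ, hφ, hzφ⟩ :=
    (isCompact_closedBall (0 : Fin m → Fin n → ℝ) C).tendsto_subseq hmem
  -- pigeonhole on the finite matrix pool
  have : Finite ↥(Set.range S) := hfin.to_subtype
  obtain ⟨A, hA⟩ := Finite.exists_infinite_fiber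
    (fun k : ℕ => (⟨S (φ k + 1), Set.mem_range_self _⟩ : ↥(Set.range S)))
  have hfreq : ∃ᶠ k in atTop,
      (⟨S (φ k + 1), Set.mem_range_self _⟩ : ↥(Set.range S)) = A := by
    rw [Nat.frequently_atTop_iff_infinite]
    rw [Set.infinite_coe_iff] at hA
    exact hA
  obtain ⟨ψ, hψ, hψA⟩ := extraction_of_frequently_atTop hfreq
  set S₀ : Matrix (Fin m) (Fin m) ℝ := (A : Matrix (Fin m) (Fin m) ℝ) with hS₀_def
  obtain ⟨t₀, ht₀⟩ := A.2
  have hdsS₀ : IsDoublyStochastic S₀ := by rw [hS₀_def, ← ht₀]; exact hds t₀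
  have hdiagS₀ : ∀ i, 0 < S₀ i i := by rw [hS₀_def, ← ht₀]; exact hdiag t₀
  have hconnS₀ : StronglyConnected (fun i j : Fin m => S₀ j i ≠ 0) := by
    rw [hS₀_def, ← ht₀]; exact hconn t₀
  set σ : ℕ → ℕ := φ ∘ ψ with hσ_def
  have hσmono : StrictMono σ := hφ.comp hψ
  have hSσ : ∀ k, S (σ k + 1) = S₀ := fun k => congrArg Subtype.val (hψA k)
  have huσ : Tendsto (fun k => u (σ k)) atTop (𝓝 z) := hzφ.comp hψ.tendsto_atTop
  -- continuity facts
  have contQ : ∀ w : Fin m → Fin n → ℝ,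
      Continuous fun v : Fin m → Fin n → ℝ => Qsum (v - w) := by
    intro w
    show Continuous fun v : Fin m → Fin n → ℝ => ∑ i, ∑ c, ((v - w) i c) ^ 2
    refine continuous_finset_sum _ fun i _ => continuous_finset_sum _ fun c _ => ?_
    exact ((continuous_apply_apply i c).sub continuous_const).pow 2
  have contP : Continuous fun v : Fin m → Fin n → ℝ => stackMap M (kron S₀ v) := by
    have h1 : Continuous fun v : Fin m → Fin n → ℝ => kron S₀ v := by
      refine continuous_pi fun i => ?_
      exact continuous_finset_sum _ fun j _ => (continuous_apply j).const_smul (S₀ i j)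
    have h2 : Continuous (stackMap M : (Fin m → Fin n → ℝ) → Fin m → Fin n → ℝ) :=
      continuous_pi fun i => ((hpc i).1).comp (continuous_apply i)
    exact h2.comp h1
  -- the decreasing distance has a limit
  set d : ℕ → ℝ := fun t => Qsum (u t - ystar) with hd_def
  have hbdd : BddBelow (Set.range d) := by
    refine ⟨0, ?_⟩
    rintro r ⟨t, rfl⟩
    exact Qsum_nonneg _
  have hdL : Tendsto d atTop (𝓝 (⨅ t, d t)) := tendsto_atTop_ciInf antid hbdd
  set L : ℝ := ⨅ t, d t with hL_def
  have hLσ : Tendsto (fun k => d (σ k)) atTop (𝓝 L) := hdL.comp hσmono.tendsto_atTop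
  have hLσ' : Tendsto (fun k => d (σ k)) atTop (𝓝 (Qsum (z - ystar))) :=
    ((contQ ystar).tendsto z).comp huσ
  have hzL : Qsum (z - ystar) = L := tendsto_nhds_unique hLσ' hLσ
  have hstep : ∀ k, u (σ k + 1) = stackMap M (kron S₀ (u (σ k))) := by
    intro k
    rw [hu (σ k), hSσ k]
  have hLσ1 : Tendsto (fun k => d (σ k + 1)) atTop (𝓝 L) :=
    hdL.comp ((tendsto_add_atTop_nat 1).comp hσmono.tendsto_atTop)
  have hLσ1' : Tendsto (fun k => d (σ k + 1)) atTop
      (𝓝 (Qsum (stackMap M (kron S₀ z) - ystar))) := by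
    have h1 : Tendsto (fun k => stackMap M (kron S₀ (u (σ k)))) atTop
        (𝓝 (stackMap M (kron S₀ z))) := (contP.tendsto z).comp huσ
    have h2 : Tendsto (fun k => Qsum (stackMap M (kron S₀ (u (σ k))) - ystar)) atTop
        (𝓝 (Qsum (stackMap M (kron S₀ z) - ystar))) :=
      ((contQ ystar).tendsto _).comp h1
    refine h2.congr fun k => ?_
    show Qsum (stackMap M (kron S₀ (u (σ k))) - ystar) = Qsum (u (σ k + 1) - ystar)
    rw [hstep k]
  have hPzL : Qsum (stackMap M (kron S₀ z) - ystar) = L := tendsto_nhds_unique hLσ1' hLσ1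
  have hEq : Qsum (stackMap M (kron S₀ z) - ystar) = Qsum (z - ystar) := by rw [hPzL, hzL]
  obtain ⟨hzc, hzf⟩ := chain_eq hpc hdsS₀ hdiagS₀ hconnS₀ hysc hysf hEq
  have hzf' : ∀ i, M i (z i) = z i := fun i => congrFun hzf i
  -- convergence of the whole sequence to z
  set g : ℕ → ℝ := fun t => Qsum (u t - z) with hg_def
  have antig : Antitone g := antitone_nat_of_succ_le (step_mono z hzc hzf')
  have hgbdd : BddBelow (Set.range g) := by
    refine ⟨0, ?_⟩
    rintro r ⟨t, rfl⟩
    exact Qsum_nonneg _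
  have hgL : Tendsto g atTop (𝓝 (⨅ t, g t)) := tendsto_atTop_ciInf antig hgbdd
  have hgσ : Tendsto (fun k => g (σ k)) atTop (𝓝 (⨅ t, g t)) := hgL.comp hσmono.tendsto_atTop
  have hgσ0 : Tendsto (fun k => g (σ k)) atTop (𝓝 0) := by
    have h1 : Tendsto (fun k => Qsum (u (σ k) - z)) atTop (𝓝 (Qsum (z - z))) :=
      ((contQ z).tendsto z).comp huσ
    have h2 : Qsum (z - z) = 0 := by simp [Qsum, sq2]
    rw [h2] at h1
    exact h1
  have hinf0 : (⨅ t, g t) = 0 := tendsto_nhds_unique hgσ hgσ0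
  have hg0 : Tendsto g atTop (𝓝 0) := hinf0 ▸ hgL
  have hu_tendsto : Tendsto u atTop (𝓝 z) := by
    rw [tendsto_pi_nhds]
    intro i
    rw [tendsto_pi_nhds]
    intro c
    rw [tendsto_iff_dist_tendsto_zero]
    refine squeeze_zero (g := fun t => Real.sqrt (g t)) (fun t => dist_nonneg) (fun t => ?_) ?_
    · rw [Real.dist_eq]
      exact coordabs z (u t) i c
    · have : Tendsto (fun t => Real.sqrt (g t)) atTop (𝓝 (Real.sqrt 0)) :=
        (Real.continuous_sqrt.tendsto 0).comp hg0
      rwa [Real.sqrt_zero] at this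
  have hx_tendsto : Tendsto x atTop (𝓝 z) := (tendsto_add_atTop_iff_nat 1).mp hu_tendsto
  -- extract the common block
  set z₀ : Fin n → ℝ := z ⟨0, hm⟩ with hz₀_def
  have hzconst : z = fun _ => z₀ := funext fun i => hzc i ⟨0, hm⟩
  refine ⟨z₀, ?_, ?_⟩
  · rw [← hzconst]
    exact hx_tendsto
  · intro i
    calc M i z₀ = M i (z i) := by rw [hzconst]
      _ = z i := hzf' i
      _ = z₀ := by rw [hzconst]
end

section
/- Let 1 < p < ∞ and let M_1, …, M_m : ℝ^n → ℝ^n (with m > 1) be paracontractions with respect to the p-norm ‖·‖_p sharing at least one common fixed point, and let M be the stacked map M(x_1, …, x_m) = (M_1(x_1), …, M_m(x_m)). Let S(1), S(2), …, S(q) be q ≥ 1 stochastic m × m matrices such that every entry of the product S(q)S(q−1)⋯S(1) is strictly positive. Then the composed map (S(q) ⊗ I) ∘ M ∘ (S(q−1) ⊗ I) ∘ M ∘ ⋯ ∘ (S(1) ⊗ I) ∘ M : (ℝ^n)^m → (ℝ^n)^m (1) is a paracontraction with respect to the mixed vector norm ‖·‖_{p,∞}, and (2) its set of fixed points equals F(M)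 ∩ C, i.e., the set of stacked vectors (y, y, …, y) where y is a common fixed point of M_1, …, M_m. -/
open Filter Topology Finset
open scoped ENNReal

/-!
Fix a common fixed point `y` of the `M i` and let `c` be the largest of the distances
`‖x i - y‖_p`. Each `M i` does not move points away from `y`, and each mixing step replaces a
point by convex combinations, so along the whole chain every agent stays within distance `c`
of `y`. If some agent `i₀` is still at distance exactly `c` at the end, strict convexity of
the `p`-norm forces every agent it averaged over in the last step to sit at the same point and
to be fixed by its own map. Propagating this backwards along the positive entries of
`S(q) ⋯ S(1)` shows that all agents start at one common fixed point. So the composed map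
strictly decreases the `‖·‖_{p,∞}`-distance to a fixed point unless `x` is a consensus of
common fixed points, which gives both claims.
-/

lemma strictConvexOn_norm_rpow {E : Type*} [NormedAddCommGroup E] [NormedSpace ℝ E]
    [StrictConvexSpace ℝ E] {p : ℝ} (hp : 1 < p) :
    StrictConvexOn ℝ Set.univ fun x : E => ‖x‖ ^ p := by
  refine ⟨convex_univ, fun x _ y _ hxy a b ha hb hab => ?_⟩
  rcases eq_or_ne ‖x‖ ‖y‖ with hn | hn
  · calc ‖a • x + b • y‖ ^ p < ‖x‖ ^ p :=
          Real.rpow_lt_rpow (norm_nonneg _) (norm_combo_lt_of_ne le_rfl hn.ge hxy ha hb hab)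
            (by linarith)
      _ = a • ‖x‖ ^ p + b • ‖y‖ ^ p := by
          rw [← hn, smul_eq_mul, smul_eq_mul, ← add_mul, hab, one_mul]
  · calc ‖a • x + b • y‖ ^ p ≤ (a * ‖x‖ + b * ‖y‖) ^ p := by
          gcongr
          refine (norm_add_le _ _).trans_eq ?_
          rw [norm_smul, norm_smul, Real.norm_of_nonneg ha.le, Real.norm_of_nonneg hb.le]
      _ < a • ‖x‖ ^ p + b • ‖y‖ ^ p :=
          (strictConvexOn_rpow hp).2 (norm_nonneg x) (norm_nonneg y) hn ha hb hab

lemma StrictConvexOn.sum_comp_apply {ι : Type*} [Fintype ι] {f : ℝ → ℝ}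
    (hf : StrictConvexOn ℝ Set.univ f) :
    StrictConvexOn ℝ Set.univ fun v : ι → ℝ => ∑ k, f (v k) := by
  refine ⟨convex_univ, fun x _ y _ hxy a b ha hb hab => ?_⟩
  obtain ⟨k₀, hk₀⟩ := Function.ne_iff.1 hxy
  simp only [Pi.add_apply, Pi.smul_apply, smul_sum, ← sum_add_distrib]
  exact sum_lt_sum (fun k _ => hf.convexOn.2 trivial trivial ha.le hb.le hab)
    ⟨k₀, mem_univ _, hf.2 trivial trivial hk₀ ha hb hab⟩

section PNorm

variable {n : ℕ} {p : ℝ}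

lemma pnorm_nonneg (v : Fin n → ℝ) : 0 ≤ pnorm p v :=
  Real.rpow_nonneg (sum_nonneg fun _ _ => Real.rpow_nonneg (abs_nonneg _) _) _

lemma pnorm_rpow (hp : 0 < p) (v : Fin n → ℝ) : pnorm p v ^ p = ∑ k, |v k| ^ p := by
  rw [pnorm, ← Real.rpow_mul (sum_nonneg fun _ _ => Real.rpow_nonneg (abs_nonneg _) _),
    one_div_mul_cancel hp.ne', Real.rpow_one]

lemma strictConvexOn_pnorm_rpow (hp : 1 < p) :
    StrictConvexOn ℝ Set.univ fun v : Fin n → ℝ => pnorm p v ^ p := by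
  simp only [pnorm_rpow (zero_lt_one.trans hp), ← Real.norm_eq_abs]
  exact (strictConvexOn_norm_rpow hp).sum_comp_apply

variable {ι : Type*} [Fintype ι] {w : ι → ℝ} {v : ι → Fin n → ℝ}

lemma pnorm_sum_smul_le (hp : 1 < p) (hw₀ : ∀ j, 0 ≤ w j) (hw₁ : ∑ j, w j = 1) {c : ℝ}
    (hv : ∀ j, pnorm p (v j) ≤ c) : pnorm p (∑ j, w j • v j) ≤ c := by
  have hp₀ : 0 < p := zero_lt_one.trans hp
  obtain ⟨j₀, -, -⟩ := exists_ne_zero_of_sum_ne_zero (hw₁.trans_ne one_ne_zero)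
  have hc : 0 ≤ c := (pnorm_nonneg _).trans (hv j₀)
  rw [← Real.rpow_le_rpow_iff (pnorm_nonneg _) hc hp₀]
  calc pnorm p (∑ j, w j • v j) ^ p ≤ ∑ j, w j • pnorm p (v j) ^ p :=
        (strictConvexOn_pnorm_rpow hp).convexOn.map_sum_le (fun j _ => hw₀ j) hw₁
          fun _ _ => trivial
    _ ≤ ∑ j, w j • c ^ p := by
        gcongr with j
        exacts [hw₀ j, pnorm_nonneg _, hv j]
    _ = c ^ p := by rw [← sum_smul, hw₁, one_smul]

lemma eq_sum_smul_of_pnorm_le (hp : 1 < p) (hw₀ : ∀ j, 0 ≤ w j) (hw₁ : ∑ j, w j = 1)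
    (hv : ∀ j, pnorm p (v j) ≤ pnorm p (∑ i, w i • v i)) {j : ι} (hj : w j ≠ 0) :
    v j = ∑ i, w i • v i := by
  have hp₀ : 0 < p := zero_lt_one.trans hp
  have hf := strictConvexOn_pnorm_rpow (n := n) hp
  refine (hf.map_sum_eq_iff' (fun j _ => hw₀ j) hw₁ fun _ _ => trivial).1 ?_ j (mem_univ _) hj
  refine le_antisymm (hf.convexOn.map_sum_le (fun j _ => hw₀ j) hw₁ fun _ _ => trivial) ?_
  calc ∑ j, w j • pnorm p (v j) ^ p ≤ ∑ j, w j • pnorm p (∑ i, w i • v i) ^ p := by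
        gcongr with j
        exacts [hw₀ j, pnorm_nonneg _, hv j]
    _ = pnorm p (∑ i, w i • v i) ^ p := by rw [← sum_smul, hw₁, one_smul]

end PNorm

lemma IsParacontraction.quasiNonexpansive {E : Type*} [AddCommGroup E] [Module ℝ E]
    [TopologicalSpace E] {N : E → ℝ} {P : E → E} (hP : IsParacontraction N P) :
    QuasiNonexpansive N P := by
  intro x y hy
  by_cases hx : P x = x
  · rw [hx]
  · exact (hP.2 x y hx hy).le

lemma foldl_mul_left_eq_mul {α R : Type*} [Monoid R] (N : α → R) (L : List α) (B : R) :
    L.foldl (fun A k => N k * A) B = L.foldl (fun A k => N k * A) 1 * B := by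
  induction L generalizing B with
  | nil => simp
  | cons a L ih => simp only [List.foldl_cons, mul_one, ih (N a * B), ih (N a), mul_assoc]

section Phi

variable {m : ℕ} (S : ℕ → Matrix (Fin m) (Fin m) ℝ)

lemma Phi_self (t : ℕ) : Phi S t t = 1 := by
  simp [Phi]

lemma Phi_eq_mul_succ {t q : ℕ} (h : t < q) : Phi S t q = Phi S (t + 1) q * S (t + 1) := by
  obtain ⟨r, rfl⟩ : ∃ r, q = t + 1 + r := ⟨q - (t + 1), by omega⟩
  rw [Phi, Phi, show t + 1 + r - t = r + 1 by omega, show t + 1 + r - (t + 1) = r by omega,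
    List.range_succ_eq_map, List.foldl_cons, List.foldl_map, mul_one, foldl_mul_left_eq_mul]
  congr 3 with A k
  rw [show t + (k + 1) + 1 = t + 1 + k + 1 by omega]

end Phi

lemma Matrix.exists_pos_of_mul_apply_pos {m : ℕ} {A B : Matrix (Fin m) (Fin m) ℝ}
    (hB : ∀ k l, 0 ≤ B k l) {i j : Fin m} (h : 0 < (A * B) i j) :
    ∃ k, 0 < A i k ∧ 0 < B k j := by
  rw [Matrix.mul_apply] at h
  obtain ⟨k, -, hk⟩ := exists_lt_of_sum_lt (show ∑ k, (0 : ℝ) < _ by simpa using h)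
  exact ⟨k, (pos_and_pos_or_neg_and_neg_of_mul_pos hk).resolve_right
    fun h => (hB k j).not_gt h.2⟩

lemma IsStochastic.kron_sub {m n : ℕ} {S : Matrix (Fin m) (Fin m) ℝ} (hS : IsStochastic S)
    (x : Fin m → Fin n → ℝ) (y : Fin n → ℝ) (i : Fin m) :
    kron S x i - y = ∑ j, S i j • (x j - y) := by
  simp only [kron, smul_sub, sum_sub_distrib, ← sum_smul, hS.2 i, one_smul]

lemma IsStochastic.kron_const {m n : ℕ} {S : Matrix (Fin m) (Fin m) ℝ} (hS : IsStochastic S)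
    (y : Fin n → ℝ) : kron S (fun _ => y) = fun _ => y := by
  funext i
  simp only [kron, ← sum_smul, hS.2 i, one_smul]

lemma continuous_kron {m n : ℕ} (S : Matrix (Fin m) (Fin m) ℝ) :
    Continuous (kron (n := n) S) := by
  unfold kron
  fun_prop

lemma continuous_stackMap {m n : ℕ} {M : Fin m → (Fin n → ℝ) → Fin n → ℝ}
    (hM : ∀ i, Continuous (M i)) : Continuous (stackMap M) :=
  continuous_pi fun i => (hM i).comp (continuous_apply i)

lemma continuous_mapChain {α : Type*} [TopologicalSpace α] {F : ℕ → α → α}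
    (hF : ∀ t, Continuous (F t)) (q : ℕ) : Continuous (mapChain F q) := by
  induction q with
  | zero => exact continuous_id
  | succ q ih => exact (hF (q + 1)).comp ih

lemma mapChain_eq_self {α : Type*} {F : ℕ → α → α} {q : ℕ} {x : α}
    (hF : ∀ t, 1 ≤ t → t ≤ q → F t x = x) : mapChain F q x = x := by
  induction q with
  | zero => rfl
  | succ q ih =>
    change F (q + 1) (mapChain F q x) = x
    rw [ih fun t h₁ h₂ => hF t h₁ (by omega), hF (q + 1) (by omega) le_rfl]

def consensusStep {m n : ℕ} (M : Fin m → (Fin n → ℝ) → Fin n → ℝ)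
    (S : ℕ → Matrix (Fin m) (Fin m) ℝ) (t : ℕ) : (Fin m → Fin n → ℝ) → Fin m → Fin n → ℝ :=
  kron (S t) ∘ stackMap M

section Trajectory

variable {m n : ℕ} {p : ℝ} {M : Fin m → (Fin n → ℝ) → Fin n → ℝ}
  {y : Fin n → ℝ} {c : ℝ}

lemma pnorm_kron_stackMap_sub_le (hp : 1 < p) (hM : ∀ i, QuasiNonexpansive (pnorm p) (M i))
    (hy : ∀ i, M i y = y) {S : Matrix (Fin m) (Fin m) ℝ} (hS : IsStochastic S)
    {x : Fin m → Fin n → ℝ} (hx : ∀ j, pnorm p (x j - y) ≤ c) (i : Fin m) :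
    pnorm p (kron S (stackMap M x) i - y) ≤ c := by
  rw [hS.kron_sub]
  exact pnorm_sum_smul_le hp (hS.1 i) (hS.2 i) fun j => (hM j _ _ (hy j)).trans (hx j)

lemma eq_of_pnorm_kron_stackMap_sub_eq (hp : 1 < p)
    (hM : ∀ i, IsParacontraction (pnorm p) (M i)) (hy : ∀ i, M i y = y)
    {S : Matrix (Fin m) (Fin m) ℝ} (hS : IsStochastic S) {x : Fin m → Fin n → ℝ}
    (hx : ∀ j, pnorm p (x j - y) ≤ c) {i j : Fin m}
    (hi : pnorm p (kron S (stackMap M x) i - y) = c) (hij : 0 < S i j) :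
    M j (x j) = x j ∧ x j = kron S (stackMap M x) i := by
  have hMj : M j (x j) - y = kron S (stackMap M x) i - y := by
    rw [hS.kron_sub]
    refine eq_sum_smul_of_pnorm_le (v := fun j => stackMap M x j - y) hp (hS.1 i) (hS.2 i)
      (fun k => ?_) hij.ne'
    rw [← hS.kron_sub, hi]
    exact ((hM k).quasiNonexpansive _ _ (hy k)).trans (hx k)
  have hfix : M j (x j) = x j := by
    by_contra hne
    have hlt := (hM j).2 _ _ hne (hy j)
    rw [hMj, hi] at hlt
    exact (hx j).not_gt hlt
  exact ⟨hfix, hfix ▸ sub_left_injective hMj⟩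

variable {S : ℕ → Matrix (Fin m) (Fin m) ℝ} {q : ℕ} {x : Fin m → Fin n → ℝ}

lemma pnorm_mapChain_sub_le (hp : 1 < p) (hM : ∀ i, IsParacontraction (pnorm p) (M i))
    (hy : ∀ i, M i y = y) (hS : ∀ t, 1 ≤ t → t ≤ q → IsStochastic (S t))
    (hx : ∀ j, pnorm p (x j - y) ≤ c) {t : ℕ} (ht : t ≤ q) (i : Fin m) :
    pnorm p (mapChain (consensusStep M S) t x i - y) ≤ c := by
  induction t generalizing i with
  | zero => exact hx i
  | succ t ih =>
    exact pnorm_kron_stackMap_sub_le hp (fun j => (hM j).quasiNonexpansive) hy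
      (hS _ (by omega) ht) (ih (by omega)) i

lemma fixed_and_eq_of_Phi_pos (hp : 1 < p)
    (hM : ∀ i, IsParacontraction (pnorm p) (M i)) (hy : ∀ i, M i y = y)
    (hS : ∀ t, 1 ≤ t → t ≤ q → IsStochastic (S t)) (hx : ∀ j, pnorm p (x j - y) ≤ c)
    {i₀ : Fin m} (hi₀ : pnorm p (mapChain (consensusStep M S) q x i₀ - y) = c)
    {t : ℕ} (ht : t < q)
    (hnext : ∀ k, 0 < Phi S (t + 1) q i₀ k →
      mapChain (consensusStep M S) (t + 1) x k = mapChain (consensusStep M S) q x i₀)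
    {j : Fin m} (hj : 0 < Phi S t q i₀ j) :
    M j (mapChain (consensusStep M S) t x j) = mapChain (consensusStep M S) t x j ∧
      mapChain (consensusStep M S) t x j = mapChain (consensusStep M S) q x i₀ := by
  have hSt := hS (t + 1) (by omega) ht
  rw [Phi_eq_mul_succ S ht] at hj
  obtain ⟨k, hk, hkj⟩ := Matrix.exists_pos_of_mul_apply_pos hSt.1 hj
  rw [← hnext k hk]
  have hk_tight : pnorm p (mapChain (consensusStep M S) (t + 1) x k - y) = c := by
    rw [hnext k hk, hi₀]
  exact eq_of_pnorm_kron_stackMap_sub_eq hp hM hy hSt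
    (pnorm_mapChain_sub_le hp hM hy hS hx ht.le) hk_tight hkj

lemma mapChain_eq_of_Phi_pos (hp : 1 < p)
    (hM : ∀ i, IsParacontraction (pnorm p) (M i)) (hy : ∀ i, M i y = y)
    (hS : ∀ t, 1 ≤ t → t ≤ q → IsStochastic (S t)) (hx : ∀ j, pnorm p (x j - y) ≤ c)
    {i₀ : Fin m} (hi₀ : pnorm p (mapChain (consensusStep M S) q x i₀ - y) = c)
    {t : ℕ} (ht : t ≤ q) {j : Fin m} (hj : 0 < Phi S t q i₀ j) :
    mapChain (consensusStep M S) t x j = mapChain (consensusStep M S) q x i₀ := by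
  induction ht using Nat.decreasingInduction generalizing j with
  | self =>
    obtain rfl : i₀ = j := by
      by_contra hne
      simp [Phi_self, Matrix.one_apply_ne hne] at hj
    rfl
  | of_succ t ht ih =>
    exact (fixed_and_eq_of_Phi_pos hp hM hy hS hx hi₀ ht (fun k hk => ih hk) hj).2

theorem exists_consensus_of_mixedPInf_le (hm : 0 < m) (hp : 1 < p)
    (hM : ∀ i, IsParacontraction (pnorm p) (M i)) (hy : ∀ i, M i y = y) (hq : 1 ≤ q)
    (hS : ∀ t, 1 ≤ t → t ≤ q → IsStochastic (S t)) (hpos : ∀ i j, 0 < Phi S 0 q i j)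
    (hle : mixedPInf p (x - fun _ => y) ≤
      mixedPInf p (mapChain (consensusStep M S) q x - fun _ => y)) :
    ∃ z, (∀ i, x i = z) ∧ ∀ i, M i z = z := by
  have : Nonempty (Fin m) := ⟨⟨0, hm⟩⟩
  have hx : ∀ j, pnorm p (x j - y) ≤ mixedPInf p (x - fun _ => y) :=
    le_ciSup (Set.finite_range _).bddAbove
  obtain ⟨i₀, hi₀⟩ :=
    exists_eq_ciSup_of_finite (f := fun i => pnorm p (mapChain (consensusStep M S) q x i - y))
  have htight :
      pnorm p (mapChain (consensusStep M S) q x i₀ - y) = mixedPInf p (x - fun _ => y) :=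
    le_antisymm (pnorm_mapChain_sub_le hp hM hy hS hx le_rfl i₀) (hle.trans_eq hi₀.symm)
  have hstep := fun j => fixed_and_eq_of_Phi_pos hp hM hy hS hx htight hq
    (fun k hk => mapChain_eq_of_Phi_pos hp hM hy hS hx htight hq hk) (hpos i₀ j)
  exact ⟨_, fun j => (hstep j).2, fun j => (hstep j).2 ▸ (hstep j).1⟩

end Trajectory

lemma mapChain_consensusStep_const {m n : ℕ} {M : Fin m → (Fin n → ℝ) → Fin n → ℝ}
    {S : ℕ → Matrix (Fin m) (Fin m) ℝ} {q : ℕ} (hS : ∀ t, 1 ≤ t → t ≤ q → IsStochastic (S t))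
    {z : Fin n → ℝ} (hz : ∀ i, M i z = z) :
    mapChain (consensusStep M S) q (fun _ => z) = fun _ => z := by
  refine mapChain_eq_self fun t h₁ h₂ => ?_
  have hM : stackMap M (fun _ => z) = fun _ => z := funext hz
  simp only [consensusStep, Function.comp_apply, hM, (hS t h₁ h₂).kron_const]

theorem stmt14 {n m : ℕ} (hm : 1 < m) (p : ℝ) (hp : 1 < p)
    (M : Fin m → (Fin n → ℝ) → (Fin n → ℝ))
    (hpc : ∀ i, IsParacontraction (pnorm p) (M i))
    (hcommon : ∃ y : Fin n → ℝ, ∀ i, M i y = y)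
    (q : ℕ) (hq : 1 ≤ q) (S : ℕ → Matrix (Fin m) (Fin m) ℝ)
    (hS : ∀ t, 1 ≤ t → t ≤ q → IsStochastic (S t))
    (hpos : ∀ i j, 0 < Phi S 0 q i j) :
    IsParacontraction (mixedPInf p)
      (mapChain (fun t => kron (S t) ∘ stackMap M) q) ∧
    {x : Fin m → Fin n → ℝ | mapChain (fun t => kron (S t) ∘ stackMap M) q x = x}
      = {x : Fin m → Fin n → ℝ | ∃ y, (∀ i, x i = y) ∧ ∀ i, M i y = y} := by
  change IsParacontraction _ (mapChain (consensusStep M S) q) ∧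
    {x | mapChain (consensusStep M S) q x = x} = _
  have hfix : ∀ x, mapChain (consensusStep M S) q x = x ↔
      ∃ y, (∀ i, x i = y) ∧ ∀ i, M i y = y := by
    refine fun x => ⟨fun hx => ?_, fun ⟨z, hxz, hz⟩ => ?_⟩
    · obtain ⟨y, hy⟩ := hcommon
      exact exists_consensus_of_mixedPInf_le (by omega) hp hpc hy hq hS hpos (by rw [hx])
    · obtain rfl : x = fun _ => z := funext hxz
      exact mapChain_consensusStep_const hS hz
  refine ⟨⟨continuous_mapChain (fun t => (continuous_kron _).comp
    (continuous_stackMap fun i => (hpc i).1)) q, fun x y hx hy => ?_⟩, Set.ext hfix⟩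
  obtain ⟨z, hyz, hz⟩ := (hfix y).1 hy
  obtain rfl : y = fun _ => z := funext hyz
  by_contra! hle
  exact hx ((hfix x).2 (exists_consensus_of_mixedPInf_le (by omega) hp hpc hz hq hS hpos hle))
end

section
/- Let ‖·‖ be a norm on (ℝ^n)^m, let M : (ℝ^n)^m → (ℝ^n)^m be quasi-nonexpansive with respect to ‖·‖, and for each t ≥ 1 let S(t) be an m × m stochastic matrix such that the map S(t) ⊗ I is quasi-nonexpansive with respect to ‖·‖. Define x(t+1) = M((S(t) ⊗ I) x(t)) for t ≥ 1 from an initial x(1), and set x̄(t) = (S(t) ⊗ I) x(t). If some subsequence of (x̄(t)) converges to a point x* ∈ F(M) ∩ C, then x(t) converges to x* as t → ∞. -/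
/-!
The consensus point `x*` is fixed by `M` and, because rows of a stochastic matrix sum to one, by
every `S(t) ⊗ I`. Quasi-nonexpansiveness of both maps then makes `N (x t - x*)` nonincreasing, and
`N (x (φ k + 1) - x*) ≤ N (x̄ (φ k) - x*) → 0` forces the whole nonincreasing sequence to `0`.
Convergence in `N` is ordinary convergence because all norms on a finite-dimensional space are
equivalent.
-/

open Filter Topology Finset
open scoped ENNReal

namespace IsNormOn

section Algebraic

variable {E : Type*} [AddCommGroup E] [Module ℝ E] {N : E → ℝ}

def toSeminorm (hN : IsNormOn N) : Seminorm ℝ E :=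
  Seminorm.of N hN.2.2 fun a x => by rw [hN.2.1, Real.norm_eq_abs]

lemma nonneg (hN : IsNormOn N) (x : E) : 0 ≤ N x :=
  apply_nonneg hN.toSeminorm x

lemma map_zero (hN : IsNormOn N) : N 0 = 0 :=
  (hN.1 0).2 rfl

end Algebraic

variable {E : Type*} [NormedAddCommGroup E] [NormedSpace ℝ E] [FiniteDimensional ℝ E]
  {N : E → ℝ}

lemma continuous (hN : IsNormOn N) : Continuous N :=
  continuousOn_univ.1 (hN.toSeminorm.convexOn.continuousOn isOpen_univ)

lemma exists_pos_mul_norm_le (hN : IsNormOn N) : ∃ c, 0 < c ∧ ∀ x, c * ‖x‖ ≤ N x := by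
  have hpos : ∀ x ∈ Metric.sphere (0 : E) 1, 0 < N x := fun x hx =>
    (hN.nonneg x).lt_of_ne' fun h => by simp [(hN.1 x).1 h] at hx
  obtain ⟨c, hc, hcN⟩ :=
    (isCompact_sphere (0 : E) 1).exists_forall_le' hN.continuous.continuousOn hpos
  refine ⟨c, hc, fun x => ?_⟩
  rcases eq_or_ne x 0 with rfl | hx
  · simp [hN.map_zero]
  have hxpos : 0 < ‖x‖ := norm_pos_iff.2 hx
  have hunit := hcN (‖x‖⁻¹ • x) (by simp [norm_smul, hx])
  rw [hN.2.1, abs_of_pos (inv_pos.2 hxpos)] at hunit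
  exact (le_inv_mul_iff₀' hxpos).1 hunit

lemma tendsto_nhds_iff (hN : IsNormOn N) {ι : Type*} {l : Filter ι} {f : ι → E} {a : E} :
    Tendsto f l (𝓝 a) ↔ Tendsto (fun i => N (f i - a)) l (𝓝 0) := by
  constructor
  · intro h
    simpa [hN.map_zero, Function.comp_def] using
      (hN.continuous.tendsto 0).comp (tendsto_sub_nhds_zero_iff.2 h)
  · intro h
    obtain ⟨c, hc, hcN⟩ := hN.exists_pos_mul_norm_le
    rw [tendsto_iff_norm_sub_tendsto_zero]
    refine squeeze_zero (fun _ => norm_nonneg _) (fun i => (le_div_iff₀' hc).2 (hcN _)) ?_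
    simpa using h.div_const c

end IsNormOn

lemma tendsto_zero_of_antitoneOn_of_subseq {a : ℕ → ℝ} {s : ℕ} (ha : AntitoneOn a {t | s ≤ t})
    (h0 : ∀ t, 0 ≤ a t) {ψ : ℕ → ℕ} (hψ : Tendsto ψ atTop atTop)
    (hsub : Tendsto (fun k => a (ψ k)) atTop (𝓝 0)) : Tendsto a atTop (𝓝 0) := by
  refine tendsto_order.2 ⟨fun ε hε => .of_forall fun t => hε.trans_le (h0 t), fun ε hε => ?_⟩
  obtain ⟨k, hks, hkε⟩ :=
    ((hψ.eventually_ge_atTop s).and (hsub.eventually (gt_mem_nhds hε))).exists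
  filter_upwards [eventually_ge_atTop (ψ k)] with t ht
  exact (ha hks (hks.trans ht) ht).trans_lt hkε

lemma antitoneOn_sub_of_quasiNonexpansive {E : Type*} [AddCommGroup E] {N : E → ℝ}
    {M : E → E} {P : ℕ → E → E} {x : ℕ → E} {y : E} (hM : QuasiNonexpansive N M)
    (hP : ∀ t, QuasiNonexpansive N (P t)) (hMy : M y = y) (hPy : ∀ t, P t y = y)
    (hx : ∀ t, 1 ≤ t → x (t + 1) = M (P t (x t))) :
    AntitoneOn (fun t => N (x t - y)) {t | 1 ≤ t} :=
  antitoneOn_nat_Ici_of_succ_le fun t ht => by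
    simpa only [hx t ht] using (hM _ y hMy).trans (hP t (x t) y (hPy t))

theorem tendsto_of_quasiNonexpansive_of_subseq {E : Type*} [NormedAddCommGroup E]
    [NormedSpace ℝ E] [FiniteDimensional ℝ E] {N : E → ℝ} {M : E → E} {P : ℕ → E → E}
    {x : ℕ → E} {y : E} (hN : IsNormOn N) (hM : QuasiNonexpansive N M)
    (hP : ∀ t, QuasiNonexpansive N (P t)) (hMy : M y = y) (hPy : ∀ t, P t y = y)
    (hx : ∀ t, 1 ≤ t → x (t + 1) = M (P t (x t))) {φ : ℕ → ℕ} (hφ : Tendsto φ atTop atTop)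
    (hconv : Tendsto (fun k => P (φ k) (x (φ k))) atTop (𝓝 y)) : Tendsto x atTop (𝓝 y) := by
  rw [hN.tendsto_nhds_iff] at hconv ⊢
  have hstep : ∀ t, 1 ≤ t → N (x (t + 1) - y) ≤ N (P t (x t) - y) := fun t ht => by
    simpa only [hx t ht] using hM _ y hMy
  refine tendsto_zero_of_antitoneOn_of_subseq
    (antitoneOn_sub_of_quasiNonexpansive hM hP hMy hPy hx) (fun t => hN.nonneg _)
    (ψ := fun k => φ k + 1) (tendsto_atTop_mono (fun k => Nat.le_succ _) hφ) ?_
  exact squeeze_zero' (.of_forall fun k => hN.nonneg _)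
    ((hφ.eventually_ge_atTop 1).mono fun k hk => hstep _ hk) hconv

lemma kron_eq_self_of_mem_consensusSet {m n : ℕ} {S : Matrix (Fin m) (Fin m) ℝ}
    (hS : ∀ i, ∑ j, S i j = 1) {x : Fin m → Fin n → ℝ} (hx : x ∈ consensusSet m n) :
    kron S x = x := by
  funext i
  simp only [kron, fun j => hx j i, ← Finset.sum_smul, hS i, one_smul]

theorem stmt15 {n m : ℕ} (N : (Fin m → Fin n → ℝ) → ℝ) (hN : IsNormOn N)
    (M : (Fin m → Fin n → ℝ) → (Fin m → Fin n → ℝ))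
    (hM : QuasiNonexpansive N M)
    (S : ℕ → Matrix (Fin m) (Fin m) ℝ) (hS : ∀ t, IsStochastic (S t))
    (hSq : ∀ t, QuasiNonexpansive N (kron (n := n) (S t)))
    (x : ℕ → Fin m → Fin n → ℝ)
    (hx : ∀ t, 1 ≤ t → x (t + 1) = M (kron (S t) (x t)))
    (xstar : Fin m → Fin n → ℝ) (hfix : M xstar = xstar)
    (hcons : xstar ∈ consensusSet m n)
    (φ : ℕ → ℕ) (hφ : StrictMono φ)
    (hconv : Tendsto (fun k => kron (S (φ k)) (x (φ k))) atTop (𝓝 xstar)) :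
    Tendsto x atTop (𝓝 xstar) :=
  tendsto_of_quasiNonexpansive_of_subseq hN hM hSq hfix
    (fun t => kron_eq_self_of_mem_consensusSet (hS t).2 hcons) hx hφ.tendsto_atTop hconv
end
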